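/- arXiv:1209.2100 — 2 statements merged into one kernel-verified Lean document; each statement's English description precedes it below -/
import Mathlib

section
/- The ring ℂ[x, y, z]/(x·y − z² − 1) is not a unique factorization domain. -/
/-!
The assignment `x ↦ T`, `y ↦ (t² + 1) T⁻¹`, `z ↦ t` defines a map `φ` from
`R = K[x,y,z]/(xy - z² - 1)` to `K[t][T, T⁻¹]`. Followed by `T ↦ x`, `t ↦ z` it becomes the
localization map `R → R[1/x]`, so `φ` is injective when `R` is a domain. A factorization
`x = a b` becomes `T = φ(a) φ(b)`, so `φ(a) = u T^m` and `φ(b) = u⁻¹ T^(1-m)` with `u` a unit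
of `K[t]`; whichever exponent is `≤ 0` exhibits `a` (or `b`) times a power of `x` as a unit.
Hence `x` is irreducible. It is not prime: `x` divides `x y = (z + i)(z - i)`, but evaluating
at the points `(0, 0, ±i)` of the surface shows that it divides neither factor.
-/

open MvPolynomial
open LaurentPolynomial (T)
open scoped Polynomial LaurentPolynomial

noncomputable section

theorem LaurentPolynomial.exists_C_mul_T_of_isUnit {R : Type*} [CommRing R] [IsDomain R]
    {f : R[T;T⁻¹]} (hf : IsUnit f) : ∃ (u : Rˣ) (m : ℤ), f = C (u : R) * T m := by
  obtain ⟨g, hfg⟩ := hf.exists_right_inv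
  obtain ⟨n, f', hf'⟩ := f.exists_T_pow
  obtain ⟨p, g', hg'⟩ := g.exists_T_pow
  have hprod : f' * g' = Polynomial.X ^ (n + p) := by
    apply Polynomial.toLaurent_injective
    rw [map_mul, hf', hg', Polynomial.toLaurent_X_pow, Nat.cast_add, T_add,
      mul_mul_mul_comm, hfg, one_mul]
  obtain ⟨i, -, hi⟩ := (dvd_prime_pow Polynomial.prime_X _).mp (Dvd.intro g' hprod)
  obtain ⟨u, hu⟩ := hi.symm
  obtain ⟨r, hr, hru⟩ := Polynomial.isUnit_iff.mp u.isUnit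
  refine ⟨hr.unit, i - n, ?_⟩
  have hf'' : f = Polynomial.toLaurent f' * T (-n) := by
    rw [hf', mul_T_assoc, add_neg_cancel, T_zero, mul_one]
  rw [hr.unit_spec, hf'', ← hu, ← hru, map_mul, Polynomial.toLaurent_X_pow,
    Polynomial.toLaurent_C, T_sub]
  ring

def conicPoly (K : Type*) [CommRing K] : MvPolynomial (Fin 3) K := X 0 * X 1 - X 2 ^ 2 - 1

abbrev ConicRing (K : Type*) [CommRing K] : Type _ :=
  MvPolynomial (Fin 3) K ⧸ Ideal.span {conicPoly K}

namespace ConicRing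

variable (K : Type*) [CommRing K]

def x : ConicRing K := Ideal.Quotient.mk _ (X 0)
def y : ConicRing K := Ideal.Quotient.mk _ (X 1)
def z : ConicRing K := Ideal.Quotient.mk _ (X 2)

theorem x_mul_y : x K * y K = z K ^ 2 + 1 := by
  rw [x, y, z, ← map_mul, ← map_pow, ← map_one (Ideal.Quotient.mk _), ← map_add,
    Ideal.Quotient.eq]
  exact Ideal.subset_span (Set.mem_singleton_of_eq (by rw [conicPoly]; ring))

variable {K} {A : Type*} [CommRing A]

theorem ringHom_ext {f g : ConicRing K →+* A}
    (hC : ∀ a, f (algebraMap K _ a) = g (algebraMap K _ a)) (hx : f (x K) = g (x K))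
    (hy : f (y K) = g (y K)) (hz : f (z K) = g (z K)) : f = g :=
  Ideal.Quotient.ringHom_ext <| MvPolynomial.ringHom_ext hC fun i => by
    fin_cases i
    exacts [hx, hy, hz]

variable [Algebra K A]

def lift (a b c : A) (h : a * b = c ^ 2 + 1) : ConicRing K →ₐ[K] A :=
  Ideal.Quotient.liftₐ _ (aeval ![a, b, c]) fun p hp => by
    obtain ⟨q, rfl⟩ := Ideal.mem_span_singleton'.mp hp
    simp [conicPoly, h]

section lift

variable {a b c : A} (h : a * b = c ^ 2 + 1)

theorem lift_mk (p : MvPolynomial (Fin 3) K) :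
    lift a b c h (Ideal.Quotient.mk _ p) = aeval ![a, b, c] p :=
  Ideal.Quotient.lift_mk _ _ _

theorem lift_x : lift a b c h (x K) = a := by simp [x, lift_mk]
theorem lift_y : lift a b c h (y K) = b := by simp [y, lift_mk]
theorem lift_z : lift a b c h (z K) = c := by simp [z, lift_mk]

end lift

variable (K)

def toLaurent : ConicRing K →ₐ[K] K[X][T;T⁻¹] :=
  lift (T 1) (LaurentPolynomial.C (Polynomial.X ^ 2 + 1) * T (-1))
    (LaurentPolynomial.C Polynomial.X)
    (by rw [mul_left_comm, ← LaurentPolynomial.T_add, add_neg_cancel, LaurentPolynomial.T_zero,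
      mul_one, map_add, map_pow, map_one])

@[simp] theorem toLaurent_x : toLaurent K (x K) = T 1 := lift_x _
@[simp] theorem toLaurent_y :
    toLaurent K (y K) = LaurentPolynomial.C (Polynomial.X ^ 2 + 1) * T (-1) := lift_y _
@[simp] theorem toLaurent_z : toLaurent K (z K) = LaurentPolynomial.C Polynomial.X := lift_z _

theorem toLaurent_aeval_z (p : K[X]) :
    toLaurent K (Polynomial.aeval (z K) p) = LaurentPolynomial.C p := by
  rw [← Polynomial.aeval_algHom_apply, toLaurent_z]
  induction p using Polynomial.induction_on <;> simp_all

theorem toLaurent_injective [IsDomain (ConicRing K)] [Nontrivial K] :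
    Function.Injective (toLaurent K) := by
  have hx : x K ≠ 0 := fun h =>
    (LaurentPolynomial.isUnit_T 1).ne_zero (by simpa [h] using (toLaurent_x K).symm)
  let L := Localization.Away (x K)
  let ux : Lˣ := (IsLocalization.Away.algebraMap_isUnit (x K)).unit
  let back : K[X][T;T⁻¹] →+* L := LaurentPolynomial.eval₂
    ((algebraMap (ConicRing K) L).comp (Polynomial.aeval (z K)).toRingHom) ux
  have hback : back.comp (toLaurent K).toRingHom = algebraMap (ConicRing K) L := by
    apply ringHom_ext
    · intro a
      simp [back]
    · simp [back, ux]
    · simp only [back, ux, RingHom.coe_comp, Function.comp_apply, AlgHom.toRingHom_eq_coe,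
        RingHom.coe_coe, toLaurent_y, LaurentPolynomial.eval₂_C_mul_T, zpow_neg_one]
      rw [Units.mul_inv_eq_iff_eq_mul, IsUnit.unit_spec, ← map_mul, mul_comm, x_mul_y]
      simp
    · simp [back, ux]
  have hinj : Function.Injective (back ∘ toLaurent K) := by
    rw [show back ∘ toLaurent K = algebraMap _ L from congrArg DFunLike.coe hback]
    exact IsLocalization.injective L (powers_le_nonZeroDivisors_of_noZeroDivisors hx)
  exact hinj.of_comp

variable {K}

theorem isUnit_of_toLaurent_eq [IsDomain (ConicRing K)] [Nontrivial K] {a : ConicRing K}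
    (u : K[X]ˣ) {k : ℕ} (ha : toLaurent K a = LaurentPolynomial.C (u : K[X]) * T (-k)) :
    IsUnit a := by
  have hxa : x K ^ k * a = Polynomial.aeval (z K) (u : K[X]) := by
    apply toLaurent_injective K
    rw [map_mul, map_pow, toLaurent_x, ha, toLaurent_aeval_z, mul_left_comm,
      LaurentPolynomial.T_pow, ← LaurentPolynomial.T_add]
    simp
  exact isUnit_of_mul_isUnit_right (hxa ▸ u.isUnit.map _)

theorem not_isUnit_x [Nontrivial K] {i : K} (hi : i ^ 2 = -1) : ¬ IsUnit (x K) := fun h => by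
  have := h.map (lift (0 : K) 0 i (by rw [hi]; ring))
  rw [lift_x] at this
  simp at this

theorem irreducible_x [IsDomain (ConicRing K)] [IsDomain K] {i : K} (hi : i ^ 2 = -1) :
    Irreducible (x K) := by
  refine ⟨not_isUnit_x hi, fun a b hab => ?_⟩
  have hT : toLaurent K a * toLaurent K b = T 1 := by rw [← map_mul, ← hab, toLaurent_x]
  obtain ⟨u, m, ha⟩ := LaurentPolynomial.exists_C_mul_T_of_isUnit
    (isUnit_of_mul_isUnit_left (hT ▸ LaurentPolynomial.isUnit_T 1))
  have hb : toLaurent K b = LaurentPolynomial.C (↑u⁻¹ : K[X]) * T (-(m - 1)) := by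
    have hunit : IsUnit (LaurentPolynomial.C (u : K[X]) * T m) :=
      (u.isUnit.map _).mul (LaurentPolynomial.isUnit_T m)
    apply hunit.mul_left_cancel
    rw [← ha, hT, ha, mul_mul_mul_comm, ← map_mul, Units.mul_inv, map_one, one_mul,
      ← LaurentPolynomial.T_add]
    congr 1
    ring
  rcases le_or_gt m 0 with hm | hm
  · obtain ⟨k, rfl⟩ := Int.exists_eq_neg_ofNat hm
    exact .inl (isUnit_of_toLaurent_eq u ha)
  · obtain ⟨k, hk⟩ := Int.eq_ofNat_of_zero_le (by omega : 0 ≤ m - 1)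
    exact .inr (isUnit_of_toLaurent_eq u⁻¹ (hk ▸ hb))

theorem add_eq_zero_of_x_dvd {c s : K} (hc : c ^ 2 = -1)
    (h : x K ∣ z K + algebraMap K _ s) : c + s = 0 := by
  have := map_dvd (lift (0 : K) 0 c (by rw [hc]; ring)) h
  rwa [map_add, lift_x, lift_z, AlgHom.commutes, Algebra.algebraMap_self, RingHom.id_apply,
    zero_dvd_iff] at this

theorem not_prime_x [IsDomain K] {i : K} (hi : i ^ 2 = -1) (h2 : (2 : K) ≠ 0) :
    ¬ Prime (x K) := by
  intro hp
  have hi' : algebraMap K (ConicRing K) i ^ 2 = -1 := by rw [← map_pow, hi, map_neg, map_one]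
  have hdvd : x K ∣ (z K + algebraMap K _ i) * (z K + algebraMap K _ (-i)) :=
    ⟨y K, by rw [map_neg]; linear_combination -x_mul_y K - hi'⟩
  have h2i : i + i ≠ 0 := by
    rw [← two_mul]
    exact mul_ne_zero h2 (by rintro rfl; simp at hi)
  rcases hp.dvd_or_dvd hdvd with h | h
  · exact h2i (add_eq_zero_of_x_dvd hi h)
  · exact h2i (by linear_combination -add_eq_zero_of_x_dvd (c := -i) (by rw [neg_sq, hi]) h)

end ConicRing

end

open MvPolynomial in
/-- The ring `ℂ[x,y,z]/(x*y - z² - 1)` is not a unique factorization domain.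
(The quotient is an integral domain since `x*y - z² - 1` is irreducible; this is
recorded as an instance hypothesis so that unique factorization can be stated.) -/
theorem stmt_5
    [IsDomain (MvPolynomial (Fin 3) ℂ ⧸
      Ideal.span {(X 0 * X 1 - X 2 ^ 2 - 1 : MvPolynomial (Fin 3) ℂ)})] :
    ¬ UniqueFactorizationMonoid (MvPolynomial (Fin 3) ℂ ⧸
      Ideal.span {(X 0 * X 1 - X 2 ^ 2 - 1 : MvPolynomial (Fin 3) ℂ)}) := by
  intro hufd
  let : IsDomain (ConicRing ℂ) := ‹_›
  let : UniqueFactorizationMonoid (ConicRing ℂ) := hufd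
  exact ConicRing.not_prime_x Complex.I_sq two_ne_zero
    (UniqueFactorizationMonoid.irreducible_iff_prime.mp (ConicRing.irreducible_x Complex.I_sq))
end

section
/- Let N be a free abelian group of finite rank with a direct sum decomposition N = A ⊕ B where A has basis 𝔞 and B has basis 𝔟. Let u ∈ N be written u = u' + u'' with u' ∈ A and u'' ∈ B, and suppose u'' ≠ 0 is a primitive element of B (i.e. u'' is not a positive multiple kv with k ≥ 2, v ∈ B; equivalently the gcd of its coordinates in the basis 𝔟 is 1). Then the set {u} ∪ 𝔞 is ℤ-linearly independent and the rational cone generated by {u} ∪ 𝔞 in N ⊗ ℚ is a smooth (unimodular) cone, i.e. {u} ∪ 𝔞 extends to a ℤ-basis of N. -/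
/-- Let `N = A ⊕ B` be a finite-rank free abelian group, with `𝔞` a basis of `A` and
`𝔟` a basis of `B`. Write `u = u' + u''` with `u' ∈ A`, `u'' ∈ B`, and assume `u''`
is nonzero and primitive in `B`. Then `{u} ∪ 𝔞` is `ℤ`-linearly independent and the
cone it generates is smooth: `{u} ∪ 𝔞` extends to a `ℤ`-basis of `N`. -/
theorem stmt_15 {N : Type*} [AddCommGroup N] [Module ℤ N]
    [Module.Free ℤ N] [Module.Finite ℤ N]
    (A B : Submodule ℤ N) (hAB : IsCompl A B)
    {ιA ιB : Type*} [Fintype ιA] [Fintype ιB]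
    (a : Module.Basis ιA ℤ A) (b : Module.Basis ιB ℤ B)
    (u u' u'' : N) (hu : u = u' + u'') (hu' : u' ∈ A) (hu'' : u'' ∈ B)
    (hne : u'' ≠ 0)
    (hprim : ∀ (k : ℕ) (v : N), 2 ≤ k → v ∈ B → u'' ≠ (k : ℤ) • v) :
    LinearIndependent ℤ (Sum.elim (fun i : ιA => (a i : N)) (fun _ : Unit => u)) ∧
    ∃ bas : Module.Basis (Fin (Module.finrank ℤ N)) ℤ N,
      insert u (Set.range fun i : ιA => (a i : N)) ⊆ Set.range ⇑bas := by
  classical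
  rename Module ℤ N => instN
  have hEq : instN = AddCommGroup.toIntModule N := by
    letI := AddCommGroup.uniqueIntModule (M := N)
    exact Subsingleton.elim _ _
  subst hEq
  set w : B := ⟨u'', hu''⟩ with hw
  set y : ιB → ℤ := fun j => b.repr w j with hy
  have hwne : w ≠ 0 := by
    simp only [hw, ne_eq, Submodule.mk_eq_zero]; exact hne
  -- Step 1: 1 ∈ span of coordinates
  have h1 : (1 : ℤ) ∈ Submodule.span ℤ (Set.range y) := by
    obtain ⟨e, he⟩ := Submodule.IsPrincipal.principal (Ideal.span (Set.range y))
    have hdvd : ∀ j, e ∣ y j := by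
      intro j
      have hj : y j ∈ Submodule.span ℤ {e} := by
        rw [← he]; exact Ideal.subset_span ⟨j, rfl⟩
      obtain ⟨k, hk⟩ := Submodule.mem_span_singleton.mp hj
      exact ⟨k, by rw [mul_comm]; exact hk.symm⟩
    set v : B := ∑ j, (y j / e) • b j with hv
    have hev : e • v = w := by
      rw [hv, Finset.smul_sum]
      have : ∀ j, e • ((y j / e) • b j) = y j • b j := by
        intro j
        rw [smul_smul, Int.mul_ediv_cancel' (hdvd j)]
      simp_rw [this]
      exact b.sum_repr w
    have hene : e ≠ 0 := by
      rintro rfl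
      simp only [zero_smul] at hev
      exact hwne hev.symm
    have habs : e.natAbs = 1 := by
      by_contra hna
      have h0 : e.natAbs ≠ 0 := fun h => hene (Int.natAbs_eq_zero.mp h)
      have h2 : 2 ≤ e.natAbs := by omega
      rcases Int.natAbs_eq e with h | h
      · refine hprim e.natAbs (v : N) h2 (Submodule.coe_mem _) ?_
        have h3 : ((e.natAbs : ℤ) • v : B) = w := by rw [← h]; exact hev
        exact (congrArg Subtype.val h3).symm
      · refine hprim e.natAbs ((-v : B) : N) h2 (Submodule.coe_mem _) ?_
        have h3 : ((e.natAbs : ℤ) • (-v) : B) = w := by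
          rw [smul_neg, ← neg_smul, ← h]; exact hev
        exact (congrArg Subtype.val h3).symm
    have htop : Ideal.span (Set.range y) = ⊤ := by
      rw [he]
      rw [Ideal.submodule_span_eq, Ideal.span_singleton_eq_top]
      exact Int.isUnit_iff.mpr (by omega)
    have : (1 : ℤ) ∈ Ideal.span (Set.range y) := htop ▸ Submodule.mem_top
    exact this
  obtain ⟨c, hc⟩ := Submodule.mem_span_range_iff_exists_fun ℤ |>.mp h1
  -- Step 2: functional g on B with g w = 1
  set g : B →ₗ[ℤ] ℤ := ∑ j, c j • b.coord j with hg
  have hgw : g w = 1 := by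
    rw [hg]
    simp only [LinearMap.coe_sum, Finset.sum_apply, LinearMap.smul_apply, Module.Basis.coord_apply,
      smul_eq_mul]
    simpa [hy, smul_eq_mul] using hc
  -- Step 3: f on N killing A with f u'' = 1
  set f : N →ₗ[ℤ] ℤ := g.comp (B.linearProjOfIsCompl A hAB.symm) with hf
  have hfA : ∀ x ∈ A, f x = 0 := by
    intro x hx
    simp [hf, Submodule.linearProjOfIsCompl, Submodule.linearProjOfIsCompl_apply_right' hAB.symm hx]
  have hfu'' : f u'' = 1 := by
    have : B.linearProjOfIsCompl A hAB.symm u'' = w :=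
      Submodule.linearProjOfIsCompl_apply_left hAB.symm w
    simp [hf, this, hgw]
  -- Step 4: automorphism φ : x ↦ x + f x • u'
  set φ : N ≃ₗ[ℤ] N := LinearEquiv.ofLinear
    (LinearMap.id + (LinearMap.toSpanSingleton ℤ N u').comp f)
    (LinearMap.id - (LinearMap.toSpanSingleton ℤ N u').comp f)
    (by ext x; simp [LinearMap.toSpanSingleton_apply, hfA u' hu', smul_smul, mul_comm])
    (by ext x; simp [LinearMap.toSpanSingleton_apply, hfA u' hu', smul_smul, mul_comm]) with hφ
  have hφA : ∀ x ∈ A, φ x = x := by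
    intro x hx
    rw [hφ]
    simp only [LinearEquiv.ofLinear_apply, LinearMap.add_apply, LinearMap.id_apply,
      LinearMap.comp_apply, LinearMap.toSpanSingleton_apply, hfA x hx, zero_smul ℤ u', add_zero]
  have hφu'' : φ u'' = u := by
    simp only [hφ, LinearEquiv.ofLinear_apply, LinearMap.add_apply, LinearMap.id_apply,
      LinearMap.comp_apply, LinearMap.toSpanSingleton_apply, hfu'', one_smul]
    rw [hu, add_comm]
  -- Step 5: basis of span{w}
  set p : Submodule ℤ B := Submodule.span ℤ (Set.range fun _ : Unit => w) with hp
  have hwp : w ∈ p := Submodule.subset_span ⟨(), rfl⟩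
  haveI : NoZeroSMulDivisors ℤ B := by
    constructor
    intro c x h
    set L : B →ₗ[ℤ] N := (B.subtype.toAddMonoidHom).toIntLinearMap with hL
    have h2 : c • L x = 0 := by rw [← map_smul, h, map_zero]
    rcases smul_eq_zero.mp h2 with hc | hx
    · exact Or.inl hc
    · exact Or.inr (Subtype.ext (by simpa [hL] using hx))
  have hliw : LinearIndependent ℤ (fun _ : Unit => w) := LinearIndependent.of_subsingleton () hwne
  set bp : Module.Basis Unit ℤ p := Module.Basis.span hliw with hbp
  -- Step 6: complement of span{w} in B
  set π : B →ₗ[ℤ] p := g.smulRight ⟨w, hwp⟩ with hπdef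
  have hπ : ∀ z : p, π (z : B) = z := by
    rintro ⟨z, hz⟩
    rw [hp] at hz
    rw [Set.range_const] at hz
    obtain ⟨t, ht⟩ := Submodule.mem_span_singleton.mp hz
    apply Subtype.ext
    show g z • w = z
    rw [← ht, map_smul, smul_eq_mul, hgw, mul_one]
  have hcompl : IsCompl p (LinearMap.ker π) := LinearMap.isCompl_of_proj hπ
  obtain ⟨n, bk⟩ := Submodule.basisOfPid b (LinearMap.ker π)
  set bB : Module.Basis (Unit ⊕ Fin n) ℤ B :=
    (bp.prod bk).map (Submodule.prodEquivOfIsCompl _ _ hcompl) with hbB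
  set e1 : (A × B) ≃ₗ[ℤ] N :=
    (Submodule.prodEquivOfIsCompl A B hAB).toAddEquiv.toIntLinearEquiv with he1def
  have he1 : ∀ z : A × B, e1 z = (z.1 : N) + (z.2 : N) := fun z => rfl
  set bN : Module.Basis (ιA ⊕ (Unit ⊕ Fin n)) ℤ N := (a.prod bB).map e1 with hbN
  have hbBl : (bB (Sum.inl ()) : N) = u'' := by
    rw [hbB]
    simp only [Module.Basis.map_apply, Submodule.coe_prodEquivOfIsCompl']
    rw [Module.Basis.prod_apply_inl_fst, Module.Basis.prod_apply_inl_snd]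
    rw [Module.Basis.span_apply]
    simp [hw]
  have hbNl : ∀ i, bN (Sum.inl i) = (a i : N) := by
    intro i
    rw [hbN, Module.Basis.map_apply, he1, Module.Basis.prod_apply_inl_fst, Module.Basis.prod_apply_inl_snd]
    simp
  have hbNr : bN (Sum.inr (Sum.inl ())) = u'' := by
    rw [hbN, Module.Basis.map_apply, he1, Module.Basis.prod_apply_inr_fst, Module.Basis.prod_apply_inr_snd]
    rw [← hbBl]
    simp
  set bas0 : Module.Basis (ιA ⊕ (Unit ⊕ Fin n)) ℤ N := bN.map φ with hbas0
  have hbas0l : ∀ i, bas0 (Sum.inl i) = (a i : N) := by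
    intro i
    rw [hbas0, Module.Basis.map_apply, hbNl i, hφA _ (a i).2]
  have hbas0r : bas0 (Sum.inr (Sum.inl ())) = u := by
    rw [hbas0, Module.Basis.map_apply, hbNr, hφu'']
  constructor
  · have heq : (Sum.elim (fun i : ιA => (a i : N)) (fun _ : Unit => u)) =
        bas0 ∘ (Sum.map id fun _ : Unit => Sum.inl ()) := by
      funext x
      rcases x with i | ⟨⟩
      · simp [hbas0l i]
      · simp [hbas0r]
    rw [heq]
    exact bas0.linearIndependent.comp _
      (Sum.map_injective.mpr ⟨Function.injective_id, Function.injective_of_subsingleton _⟩)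
  · refine ⟨bas0.reindex (Fintype.equivFinOfCardEq (Module.finrank_eq_card_basis bas0).symm), ?_⟩
    rw [Module.Basis.range_reindex]
    rintro x (rfl | ⟨i, rfl⟩)
    · exact ⟨Sum.inr (Sum.inl ()), hbas0r⟩
    · exact ⟨Sum.inl i, hbas0l i⟩
end
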